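/- arXiv:1811.02262 — 3 statements merged into one kernel-verified Lean document; each statement's English description precedes it below -/
import Mathlib

section
/- Let H be a complex separable infinite-dimensional Hilbert space and T a bounded linear operator on H. If T is Cesàro-hypercyclic, then the Hilbert-space adjoint T* satisfies a-Browder's theorem, i.e. σ_ea(T*) = σ_ab(T*). -/
open Filter Topology

noncomputable section

variable {E : Type*} [NormedAddCommGroup E] [NormedSpace ℂ E]

/-- `T` is Cesàro-hypercyclic: some orbit `{n⁻¹ Tⁿ x : n ≥ 1}` is dense. -/
def CesaroHypercyclic (T : E →L[ℂ] E) : Prop :=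
  ∃ x : E, Dense {y : E | ∃ n : ℕ, 1 ≤ n ∧ y = ((n : ℂ))⁻¹ • (T ^ n) x}

/-- `S` is upper semi-Fredholm: closed range and finite-dimensional kernel. -/
def IsUpperSemiFredholm (S : E →L[ℂ] E) : Prop :=
  IsClosed (LinearMap.range (S : E →ₗ[ℂ] E) : Set E) ∧ FiniteDimensional ℂ (LinearMap.ker (S : E →ₗ[ℂ] E))

/-- `S` is lower semi-Fredholm: closed range of finite codimension. -/
def IsLowerSemiFredholm (S : E →L[ℂ] E) : Prop :=
  IsClosed (LinearMap.range (S : E →ₗ[ℂ] E) : Set E) ∧ FiniteDimensional ℂ (E ⧸ LinearMap.range (S : E →ₗ[ℂ] E))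

/-- `S` is semi-Fredholm. -/
def IsSemiFredholm (S : E →L[ℂ] E) : Prop :=
  IsUpperSemiFredholm S ∨ IsLowerSemiFredholm S

/-- `S` is Fredholm. -/
def IsFredholm (S : E →L[ℂ] E) : Prop :=
  IsUpperSemiFredholm S ∧ IsLowerSemiFredholm S

/-- The index of a semi-Fredholm operator `S` is `≤ 0`:
`dim ker S ≤ codim ran S` (as cardinals, so that an infinite codimension is allowed). -/
def IndexLE0 (S : E →L[ℂ] E) : Prop :=
  Module.rank ℂ (LinearMap.ker (S : E →ₗ[ℂ] E)) ≤ Module.rank ℂ (E ⧸ LinearMap.range (S : E →ₗ[ℂ] E))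

/-- The index of a semi-Fredholm operator `S` is `≥ 0`:
`codim ran S ≤ dim ker S` (as cardinals, so that an infinite kernel is allowed). -/
def IndexGE0 (S : E →L[ℂ] E) : Prop :=
  Module.rank ℂ (E ⧸ LinearMap.range (S : E →ₗ[ℂ] E)) ≤ Module.rank ℂ (LinearMap.ker (S : E →ₗ[ℂ] E))

/-- `S` is Weyl: Fredholm of index zero. -/
def IsWeyl (S : E →L[ℂ] E) : Prop :=
  IsFredholm S ∧ Module.rank ℂ (LinearMap.ker (S : E →ₗ[ℂ] E)) = Module.rank ℂ (E ⧸ LinearMap.range (S : E →ₗ[ℂ] E))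

/-- `S` has finite ascent: the kernels of its powers stabilize. -/
def HasFiniteAscent (S : E →L[ℂ] E) : Prop :=
  ∃ n : ℕ, LinearMap.ker ((S ^ n : E →L[ℂ] E) : E →ₗ[ℂ] E) = LinearMap.ker ((S ^ (n + 1) : E →L[ℂ] E) : E →ₗ[ℂ] E)

/-- `S` has finite descent: the ranges of its powers stabilize. -/
def HasFiniteDescent (S : E →L[ℂ] E) : Prop :=
  ∃ n : ℕ, LinearMap.range ((S ^ n : E →L[ℂ] E) : E →ₗ[ℂ] E) = LinearMap.range ((S ^ (n + 1) : E →L[ℂ] E) : E →ₗ[ℂ] E)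

/-- `S` is Browder: Fredholm with finite ascent and finite descent. -/
def IsBrowder (S : E →L[ℂ] E) : Prop :=
  IsFredholm S ∧ HasFiniteAscent S ∧ HasFiniteDescent S

/-- `S` is bounded below. -/
def IsBoundedBelow (S : E →L[ℂ] E) : Prop :=
  ∃ c > (0 : ℝ), ∀ x : E, c * ‖x‖ ≤ ‖S x‖

/-- The Weyl spectrum `σ_w(T)`. -/
def weylSpectrum (T : E →L[ℂ] E) : Set ℂ :=
  {lam : ℂ | ¬ IsWeyl (T - lam • 1)}

/-- The Browder spectrum `σ_b(T)`. -/
def browderSpectrum (T : E →L[ℂ] E) : Set ℂ :=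
  {lam : ℂ | ¬ IsBrowder (T - lam • 1)}

/-- The approximate point spectrum `σ_a(T)`. -/
def approxSpectrum (T : E →L[ℂ] E) : Set ℂ :=
  {lam : ℂ | ¬ IsBoundedBelow (T - lam • 1)}

/-- The essential approximate point spectrum `σ_ea(T)`. -/
def essApproxSpectrum (T : E →L[ℂ] E) : Set ℂ :=
  {lam : ℂ | ¬ (IsUpperSemiFredholm (T - lam • 1) ∧ IndexLE0 (T - lam • 1))}

/-- The Browder essential approximate point spectrum `σ_ab(T)`. -/
def browderEssApproxSpectrum (T : E →L[ℂ] E) : Set ℂ :=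
  {lam : ℂ | ¬ (IsUpperSemiFredholm (T - lam • 1) ∧ IndexLE0 (T - lam • 1) ∧
    HasFiniteAscent (T - lam • 1))}

/-- `lam` is an isolated point of the set `s`. -/
def IsIsolatedPointOf (s : Set ℂ) (lam : ℂ) : Prop :=
  lam ∈ s ∧ ∃ ε > (0 : ℝ), ∀ mu ∈ s, ‖mu - lam‖ < ε → mu = lam

/-- `π₀₀(T)`: isolated points of the spectrum which are eigenvalues of finite multiplicity. -/
def pi00 (T : E →L[ℂ] E) : Set ℂ :=
  {lam : ℂ | IsIsolatedPointOf (spectrum ℂ T) lam ∧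
    LinearMap.ker ((T - lam • 1 : E →L[ℂ] E) : E →ₗ[ℂ] E) ≠ ⊥ ∧ FiniteDimensional ℂ (LinearMap.ker ((T - lam • 1 : E →L[ℂ] E) : E →ₗ[ℂ] E))}

/-- `π₀₀ᵃ(T)`: isolated points of the approximate point spectrum which are eigenvalues of
finite multiplicity. -/
def pi00a (T : E →L[ℂ] E) : Set ℂ :=
  {lam : ℂ | IsIsolatedPointOf (approxSpectrum T) lam ∧
    LinearMap.ker ((T - lam • 1 : E →L[ℂ] E) : E →ₗ[ℂ] E) ≠ ⊥ ∧ FiniteDimensional ℂ (LinearMap.ker ((T - lam • 1 : E →L[ℂ] E) : E →ₗ[ℂ] E))}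

/-- Weyl's theorem holds for `T`: `σ(T) \ σ_w(T) = π₀₀(T)`. -/
def WeylsTheorem (T : E →L[ℂ] E) : Prop :=
  spectrum ℂ T \ weylSpectrum T = pi00 T

/-- a-Weyl's theorem holds for `T`: `σ_a(T) \ σ_ea(T) = π₀₀ᵃ(T)`. -/
def AWeylsTheorem (T : E →L[ℂ] E) : Prop :=
  approxSpectrum T \ essApproxSpectrum T = pi00a T

/-- a-Browder's theorem holds for `T`: `σ_ea(T) = σ_ab(T)`. -/
def ABrowdersTheorem (T : E →L[ℂ] E) : Prop :=
  essApproxSpectrum T = browderEssApproxSpectrum T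

/-- The unit circle `∂D = {z : ‖z‖ = 1}`. -/
def unitCircleSet : Set ℂ := {z : ℂ | ‖z‖ = 1}

/-- Restriction of a continuous linear map to an invariant submodule. -/
def clmRestrict (S : E →L[ℂ] E) (M : Submodule ℂ E) (h : ∀ x ∈ M, S x ∈ M) : M →L[ℂ] M :=
  ⟨(S : E →ₗ[ℂ] E).restrict h,
    Continuous.subtype_mk (S.continuous.comp continuous_subtype_val) _⟩

/-- `S` is generalized upper semi-Fredholm: `E = M ⊕ N` for closed `S`-invariant
subspaces `M`, `N` with `S|_M` upper semi-Fredholm of index `≤ 0` and `S|_N`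
quasinilpotent. -/
def IsGeneralizedUpperSemiFredholm (S : E →L[ℂ] E) : Prop :=
  ∃ (M N : Submodule ℂ E), IsClosed (M : Set E) ∧ IsClosed (N : Set E) ∧ IsCompl M N ∧
    ∃ (hM : ∀ x ∈ M, S x ∈ M) (hN : ∀ x ∈ N, S x ∈ N),
      IsUpperSemiFredholm (clmRestrict S M hM) ∧ IndexLE0 (clmRestrict S M hM) ∧
      spectrum ℂ (clmRestrict S N hN) = {0}

/-- `σ₁(T)`: the complement of the set of `lam` around which `T - mu` is generalized
upper semi-Fredholm for all `mu ≠ lam` close enough to `lam`. -/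
def sigma1 (T : E →L[ℂ] E) : Set ℂ :=
  {lam : ℂ | ¬ ∃ ε > (0 : ℝ), ∀ mu : ℂ, 0 < ‖mu - lam‖ → ‖mu - lam‖ < ε →
    IsGeneralizedUpperSemiFredholm (T - mu • 1)}

end

/-! If `T† y = λ y` with `y ≠ 0`, the functional `⟪y, ·⟫` maps the dense Cesàro orbit
`{n⁻¹ Tⁿ x}` onto the sequence `n⁻¹ (conj λ)ⁿ ⟪y, x⟫`, which would then be dense in `ℂ`. But by
Bernoulli's inequality this sequence is bounded when `‖λ‖ ≤ 1` and bounded away from `0` when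
`‖λ‖ > 1`. Hence every `T† - λ` is injective, so it has ascent `0`, and the conditions defining
`σ_ea(T†)` and `σ_ab(T†)` coincide. -/

theorem sub_one_le_norm_inv_mul_pow {μ : ℂ} {n : ℕ} (hn : 1 ≤ n) :
    ‖μ‖ - 1 ≤ ‖(n : ℂ)⁻¹ * μ ^ n‖ := by
  have hn' : (0 : ℝ) < n := by exact_mod_cast hn
  have bernoulli := one_add_mul_le_pow (a := ‖μ‖ - 1) (by linarith [norm_nonneg μ]) n
  rw [add_sub_cancel] at bernoulli
  rw [norm_mul, norm_inv, norm_pow, Complex.norm_natCast, le_inv_mul_iff₀ hn']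
  linarith

theorem norm_inv_mul_pow_le_one {μ : ℂ} {n : ℕ} (hμ : ‖μ‖ ≤ 1) (hn : 1 ≤ n) :
    ‖(n : ℂ)⁻¹ * μ ^ n‖ ≤ 1 := by
  rw [norm_mul, norm_inv, norm_pow, Complex.norm_natCast]
  exact mul_le_one₀ (inv_le_one_of_one_le₀ (by exact_mod_cast hn))
    (pow_nonneg (norm_nonneg _) _) (pow_le_one₀ (norm_nonneg _) hμ)

theorem not_dense_inv_mul_pow (μ c : ℂ) :
    ¬ Dense {z : ℂ | ∃ n : ℕ, 1 ≤ n ∧ z = (n : ℂ)⁻¹ * μ ^ n * c} := by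
  intro hdense
  by_cases hbdd : ‖μ‖ ≤ 1 ∨ c = 0
  · refine NormedSpace.unbounded_univ ℂ ℂ ?_
    rw [← hdense.closure_eq, Metric.isBounded_closure_iff]
    refine (Metric.isBounded_closedBall (x := 0) (r := ‖c‖)).subset ?_
    rintro _ ⟨n, hn, rfl⟩
    rw [mem_closedBall_zero_iff, norm_mul]
    rcases hbdd with hμ | rfl
    · exact mul_le_of_le_one_left (norm_nonneg c) (norm_inv_mul_pow_le_one hμ hn)
    · simp
  · push Not at hbdd
    obtain ⟨hμ, hc⟩ := hbdd
    have hr : 0 < (‖μ‖ - 1) * ‖c‖ := mul_pos (by linarith) (norm_pos_iff.mpr hc)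
    have hsub : {z : ℂ | ∃ n : ℕ, 1 ≤ n ∧ z = (n : ℂ)⁻¹ * μ ^ n * c} ⊆
        (Metric.ball 0 ((‖μ‖ - 1) * ‖c‖))ᶜ := by
      rintro _ ⟨n, hn, rfl⟩
      rw [Set.mem_compl_iff, mem_ball_zero_iff, not_lt, norm_mul]
      exact mul_le_mul_of_nonneg_right (sub_one_le_norm_inv_mul_pow hn) (norm_nonneg c)
    have h0 := closure_minimal hsub Metric.isOpen_ball.isClosed_compl
    rw [hdense.closure_eq] at h0
    exact h0 (Set.mem_univ 0) (Metric.mem_ball_self hr)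

section

variable {E : Type*} [NormedAddCommGroup E] [NormedSpace ℂ E]

theorem CesaroHypercyclic.eq_zero_of_comp_eq_smul {T : E →L[ℂ] E} (hT : CesaroHypercyclic T)
    {f : StrongDual ℂ E} {μ : ℂ} (hf : f.comp T = μ • f) : f = 0 := by
  by_contra hf0
  obtain ⟨x, hx⟩ := hT
  have hpow : ∀ n : ℕ, f ((T ^ n) x) = μ ^ n * f x := by
    intro n
    induction n with
    | zero => simp
    | succ n ih =>
      rw [pow_succ']
      change (f.comp T) ((T ^ n) x) = _
      rw [hf, smul_apply, ih, smul_eq_mul, pow_succ', mul_assoc]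
  have hsurj : Function.Surjective f :=
    LinearMap.surjective_of_ne_zero (f := (f : E →ₗ[ℂ] ℂ))
      (ContinuousLinearMap.coe_injective.ne hf0)
  refine not_dense_inv_mul_pow μ (f x) ((hsurj.denseRange.dense_image f.continuous hx).mono ?_)
  rintro _ ⟨_, ⟨n, hn, rfl⟩, rfl⟩
  exact ⟨n, hn, by rw [map_smul, hpow, smul_eq_mul, mul_assoc]⟩

theorem hasFiniteAscent_of_ker_eq_bot {S : E →L[ℂ] E}
    (h : LinearMap.ker (S : E →ₗ[ℂ] E) = ⊥) : HasFiniteAscent S :=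
  ⟨0, by rw [pow_zero, pow_one, h, ContinuousLinearMap.toLinearMap_one, Module.End.one_eq_id,
    LinearMap.ker_id]⟩

theorem aBrowdersTheorem_of_forall_hasFiniteAscent {T : E →L[ℂ] E}
    (h : ∀ lam : ℂ, HasFiniteAscent (T - lam • 1)) : ABrowdersTheorem T := by
  ext lam
  exact not_congr ⟨fun hS => ⟨hS.1, hS.2, h lam⟩, fun hS => ⟨hS.1, hS.2.1⟩⟩

end

theorem CesaroHypercyclic.ker_adjoint_sub_smul_eq_bot {H : Type*} [NormedAddCommGroup H]
    [InnerProductSpace ℂ H] [CompleteSpace H] {T : H →L[ℂ] H} (hT : CesaroHypercyclic T)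
    (lam : ℂ) :
    LinearMap.ker ((ContinuousLinearMap.adjoint T - lam • 1 : H →L[ℂ] H) : H →ₗ[ℂ] H) = ⊥ := by
  refine (Submodule.eq_bot_iff _).2 fun y hy => ?_
  have heigen : ContinuousLinearMap.adjoint T y = lam • y := by
    simpa [sub_eq_zero] using hy
  have hcomp : (innerSL ℂ y).comp T = starRingEnd ℂ lam • innerSL ℂ y := by
    ext x
    simp [← ContinuousLinearMap.adjoint_inner_left, heigen, inner_smul_left]
  rw [← norm_eq_zero, ← innerSL_apply_norm ℂ, hT.eq_zero_of_comp_eq_smul hcomp, norm_zero]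

variable {H : Type*} [NormedAddCommGroup H] [InnerProductSpace ℂ H] [CompleteSpace H]
  [TopologicalSpace.SeparableSpace H]

theorem cesaroHypercyclic_adjoint_aBrowder_general
    (T : H →L[ℂ] H) (hT : CesaroHypercyclic T) :
    essApproxSpectrum (ContinuousLinearMap.adjoint T) =
      browderEssApproxSpectrum (ContinuousLinearMap.adjoint T) :=
  aBrowdersTheorem_of_forall_hasFiniteAscent fun lam =>
    hasFiniteAscent_of_ker_eq_bot (hT.ker_adjoint_sub_smul_eq_bot lam)

theorem cesaroHypercyclic_adjoint_aBrowder
    (hinf : ¬ FiniteDimensional ℂ H) (T : H →L[ℂ] H) (hT : CesaroHypercyclic T) :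
    essApproxSpectrum (ContinuousLinearMap.adjoint T) =
      browderEssApproxSpectrum (ContinuousLinearMap.adjoint T) :=
  cesaroHypercyclic_adjoint_aBrowder_general T hT
end

section
/- Let H be a complex separable infinite-dimensional Hilbert space and T a bounded linear operator on H. If T is Cesàro-hypercyclic, then the Hilbert-space adjoint T* has empty point spectrum: for every λ ∈ ℂ, ker(T* − λ) = {0}. -/
open Filter Topology

/-!
If `T† y = λ y` with `y ≠ 0`, the functional `⟪y, ·⟫` is onto `ℂ`, so it maps the dense Cesàro
orbit of `x` onto a dense subset of `ℂ`. But it sends `n⁻¹ Tⁿ x` to `n⁻¹ λ̄ⁿ ⟪y, x⟫`, and these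
numbers are bounded when `|λ| ≤ 1` or `⟪y, x⟫ = 0`, and otherwise, by Bernoulli's inequality,
stay at distance at least `(|λ| - 1) |⟪y, x⟫|` from `0`.
-/

open ContinuousLinearMap

lemma sub_one_le_pow_div_natCast {r : ℝ} (hr : 0 ≤ r) {n : ℕ} (hn : 1 ≤ n) :
    r - 1 ≤ r ^ n / n := by
  have hn_pos : (0 : ℝ) < n := by exact_mod_cast hn
  have bernoulli := one_add_mul_le_pow (a := r - 1) (by linarith) n
  rw [add_sub_cancel] at bernoulli
  rw [le_div_iff₀ hn_pos]
  nlinarith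

lemma Bornology.IsBounded.not_dense {E : Type*} [NormedAddCommGroup E] [NormedSpace ℝ E]
    [Nontrivial E] {s : Set E} (hs : Bornology.IsBounded s) : ¬ Dense s := fun hd =>
  NormedSpace.unbounded_univ ℝ E (hd.closure_eq ▸ hs.closure)

lemma not_dense_of_forall_le_norm {E : Type*} [SeminormedAddCommGroup E] {s : Set E} {ε : ℝ}
    (hε : 0 < ε) (h : ∀ p ∈ s, ε ≤ ‖p‖) : ¬ Dense s := fun hd => by
  obtain ⟨p, hps, hp⟩ := hd.exists_mem_open Metric.isOpen_ball ⟨0, Metric.mem_ball_self hε⟩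
  rw [mem_ball_zero_iff] at hp
  exact (h p hps).not_gt hp

lemma not_dense_setOf_inv_natCast_mul_pow_mul (μ c : ℂ) :
    ¬ Dense {p : ℂ | ∃ n : ℕ, 1 ≤ n ∧ p = (n : ℂ)⁻¹ * (μ ^ n * c)} := by
  have norm_eq : ∀ n : ℕ, ‖(n : ℂ)⁻¹ * (μ ^ n * c)‖ = ‖μ‖ ^ n / n * ‖c‖ := fun n => by
    simp only [norm_mul, norm_inv, norm_pow, Complex.norm_natCast]; ring
  rcases le_or_gt ‖μ‖ 1 with hμ | hμ
  · refine Bornology.IsBounded.not_dense (isBounded_iff_forall_norm_le.2 ⟨‖c‖, ?_⟩)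
    rintro _ ⟨n, hn, rfl⟩
    have hpow_le : ‖μ‖ ^ n ≤ n := (pow_le_one₀ (norm_nonneg μ) hμ).trans (by exact_mod_cast hn)
    rw [norm_eq]
    exact mul_le_of_le_one_left (norm_nonneg c) (div_le_one_of_le₀ hpow_le n.cast_nonneg)
  rcases eq_or_ne c 0 with rfl | hc
  · refine Bornology.IsBounded.not_dense (isBounded_iff_forall_norm_le.2 ⟨0, ?_⟩)
    rintro _ ⟨n, -, rfl⟩
    simp
  refine not_dense_of_forall_le_norm (ε := (‖μ‖ - 1) * ‖c‖)
    (mul_pos (sub_pos.2 hμ) (norm_pos_iff.2 hc)) ?_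
  rintro _ ⟨n, hn, rfl⟩
  rw [norm_eq]
  exact mul_le_mul_of_nonneg_right (sub_one_le_pow_div_natCast (norm_nonneg μ) hn) (norm_nonneg c)

section InnerProductSpace

variable {𝕜 E : Type*} [RCLike 𝕜] [NormedAddCommGroup E] [InnerProductSpace 𝕜 E]

lemma Dense.image_inner_right {y : E} (hy : y ≠ 0) {s : Set E} (hs : Dense s) :
    Dense (inner 𝕜 y '' s) := by
  have hsurj : Function.Surjective (innerₛₗ 𝕜 y) := by
    refine LinearMap.surjective_of_ne_zero fun h => hy ?_
    simpa using congr($h y)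
  exact hsurj.denseRange.dense_image (continuous_const.inner continuous_id) hs

variable [CompleteSpace E]

lemma inner_pow_apply_of_adjoint_apply_eq_smul {T : E →L[𝕜] E} {y : E} {lam : 𝕜}
    (hy : adjoint T y = lam • y) (x : E) (n : ℕ) :
    inner 𝕜 y ((T ^ n) x) = (starRingEnd 𝕜 lam) ^ n * inner 𝕜 y x := by
  induction n with
  | zero => simp
  | succ n ih =>
    rw [pow_succ', mul_apply_eq_comp, ← adjoint_inner_left, hy, inner_smul_left, ih,
      pow_succ', mul_assoc]

end InnerProductSpace

variable {H : Type*} [NormedAddCommGroup H] [InnerProductSpace ℂ H] [CompleteSpace H]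
  [TopologicalSpace.SeparableSpace H]

theorem cesaroHypercyclic_adjoint_pointSpectrum_empty_general
    (T : H →L[ℂ] H) (hT : CesaroHypercyclic T) :
    ∀ lam : ℂ, LinearMap.ker ((ContinuousLinearMap.adjoint T - lam • 1 : H →L[ℂ] H) : H →ₗ[ℂ] H) = ⊥ := by
  intro lam
  refine (Submodule.eq_bot_iff _).2 fun y hy => by_contra fun hy0 => ?_
  have hTy : adjoint T y = lam • y := by simpa [sub_eq_zero] using hy
  obtain ⟨x, hx⟩ := hT
  refine not_dense_setOf_inv_natCast_mul_pow_mul (starRingEnd ℂ lam) (inner ℂ y x)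
    ((hx.image_inner_right hy0).mono ?_)
  rintro _ ⟨_, ⟨n, hn, rfl⟩, rfl⟩
  exact ⟨n, hn, by rw [inner_smul_right, inner_pow_apply_of_adjoint_apply_eq_smul hTy]⟩

theorem cesaroHypercyclic_adjoint_pointSpectrum_empty
    (hinf : ¬ FiniteDimensional ℂ H) (T : H →L[ℂ] H) (hT : CesaroHypercyclic T) :
    ∀ lam : ℂ, LinearMap.ker ((ContinuousLinearMap.adjoint T - lam • 1 : H →L[ℂ] H) : H →ₗ[ℂ] H) = ⊥ :=
  cesaroHypercyclic_adjoint_pointSpectrum_empty_general T hT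
end

section
/- Let H be a complex separable infinite-dimensional Hilbert space and T a bounded linear operator on H. If T is Cesàro-hypercyclic and π₀₀(T) ⊆ π₀₀(T*), then T satisfies a-Weyl's theorem, i.e. σ_a(T) \ σ_ea(T) = π₀₀ᵃ(T). -/
/-! A Cesàro-hypercyclic operator `T` on a Hilbert space has no adjoint eigenvalues: if
`T* g = μ g` with `g ≠ 0`, then `⟪g, ·⟫` maps the dense Cesàro orbit of `x` onto the scalar
sequence `n⁻¹ (conj μ)ⁿ ⟪g, x⟫`, which is either bounded or tends to infinity, hence is never
dense in `ℂ`. As `(ran (T - λ))ᗮ = ker (T* - conj λ) = 0`, every `T - λ` with closed range is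
onto. Hence `σ(T) = σ_a(T)`, and an upper semi-Fredholm `T - λ` of index `≤ 0` is onto with
trivial kernel, i.e. invertible, so `σ_a(T) \ σ_ea(T) = ∅`. On the other side
`π₀₀ᵃ(T) = π₀₀(T) ⊆ π₀₀(T*) = ∅`, since `T*` has no eigenvalues. -/

open Filter Topology

open scoped InnerProductSpace InnerProduct ComplexConjugate

section NotDense

variable {E : Type*} [NormedAddCommGroup E] [NormedSpace ℝ E] [Nontrivial E]

lemma not_dense_of_isBounded {s : Set E} (hs : Bornology.IsBounded s) : ¬ Dense s :=
  fun hd => NormedSpace.unbounded_univ ℝ E (hd.closure_eq ▸ hs.closure)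

lemma not_dense_range_of_tendsto_norm_atTop {f : ℕ → E} (hf : Tendsto (‖f ·‖) atTop atTop) :
    ¬ Dense (Set.range f) := by
  intro hd
  obtain ⟨N, hN⟩ := eventually_atTop.1 (hf.eventually_ge_atTop 1)
  have hsub : Set.range f \ f '' Set.Iio N ⊆ {z | 1 ≤ ‖z‖} := by
    rintro _ ⟨⟨n, rfl⟩, hn⟩
    exact hN n (not_lt.1 fun h => hn ⟨n, h, rfl⟩)
  have hdense := (hd.sdiff_finite ((Set.finite_Iio N).image f)).mono hsub
  have h0 : (0 : E) ∈ closure {z : E | 1 ≤ ‖z‖} := hdense.closure_eq ▸ Set.mem_univ 0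
  rw [(isClosed_le continuous_const continuous_norm).closure_eq] at h0
  norm_num at h0

end NotDense

lemma tendsto_norm_natCast_inv_mul_pow_mul_atTop {a c : ℂ} (ha : 1 < ‖a‖) (hc : c ≠ 0) :
    Tendsto (fun n : ℕ => ‖(n : ℂ)⁻¹ * a ^ n * c‖) atTop atTop := by
  have hlim : Tendsto (fun n : ℕ => (n : ℝ) / ‖a‖ ^ n) atTop (𝓝[>] 0) := by
    refine tendsto_nhdsWithin_iff.2
      ⟨by simpa using tendsto_pow_const_div_const_pow_of_one_lt 1 ha, ?_⟩
    filter_upwards [eventually_ge_atTop 1] with n hn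
    have : (0 : ℝ) < n := by exact_mod_cast hn
    exact div_pos this (pow_pos (one_pos.trans ha) n)
  refine (hlim.inv_tendsto_nhdsGT_zero.atTop_mul_const (norm_pos_iff.2 hc)).congr fun n => ?_
  simp [div_eq_inv_mul]

lemma not_dense_range_natCast_inv_mul_pow_mul (a c : ℂ) :
    ¬ Dense (Set.range fun n : ℕ => (n : ℂ)⁻¹ * a ^ n * c) := by
  by_cases h : ‖a‖ ≤ 1 ∨ c = 0
  · refine not_dense_of_isBounded (isBounded_iff_forall_norm_le.2 ⟨‖c‖, ?_⟩)
    rintro _ ⟨n, rfl⟩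
    rcases h with ha | rfl
    · calc ‖(n : ℂ)⁻¹ * a ^ n * c‖ = (n : ℝ)⁻¹ * ‖a‖ ^ n * ‖c‖ := by simp
        _ ≤ 1 * 1 * ‖c‖ := by
          gcongr; exacts [Nat.cast_inv_le_one n, pow_le_one₀ (norm_nonneg a) ha]
        _ = ‖c‖ := by ring
    · simp
  · rw [not_or, not_le] at h
    exact not_dense_range_of_tendsto_norm_atTop
      (tendsto_norm_natCast_inv_mul_pow_mul_atTop h.1 h.2)

section Adjoint

variable {𝕜 E F : Type*} [RCLike 𝕜] [NormedAddCommGroup E] [InnerProductSpace 𝕜 E]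
  [CompleteSpace E] [NormedAddCommGroup F] [InnerProductSpace 𝕜 F] [CompleteSpace F]

lemma inner_pow_apply_of_adjoint_apply_eq_smul_s15 {T : E →L[𝕜] E} {g : E} {μ : 𝕜}
    (hg : (T†) g = μ • g) (n : ℕ) (x : E) : ⟪g, (T ^ n) x⟫_𝕜 = conj μ ^ n * ⟪g, x⟫_𝕜 := by
  induction n generalizing x with
  | zero => simp
  | succ n ih =>
    rw [pow_succ, mul_apply_eq_comp, ih, ← ContinuousLinearMap.adjoint_inner_left, hg,
      inner_smul_left, pow_succ, mul_assoc]

lemma ContinuousLinearMap.adjoint_sub_smul_one (T : E →L[𝕜] E) (μ : 𝕜) :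
    (T - μ • 1)† = T† - conj μ • 1 := by
  simp [← ContinuousLinearMap.star_eq_adjoint]

lemma ContinuousLinearMap.range_eq_top_of_isClosed_of_ker_adjoint_eq_bot {S : E →L[𝕜] F}
    (hcl : IsClosed (LinearMap.range (S : E →ₗ[𝕜] F) : Set F))
    (hker : LinearMap.ker (S† : F →ₗ[𝕜] E) = ⊥) :
    LinearMap.range (S : E →ₗ[𝕜] F) = ⊤ := by
  have : CompleteSpace (LinearMap.range (S : E →ₗ[𝕜] F)) := hcl.completeSpace_coe
  rw [← Submodule.orthogonal_eq_bot_iff]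
  exact (S.orthogonal_range).trans hker

end Adjoint

theorem CesaroHypercyclic.ker_adjoint_sub_smul_one_eq_bot {H : Type*} [NormedAddCommGroup H]
    [InnerProductSpace ℂ H] [CompleteSpace H] {T : H →L[ℂ] H} (hT : CesaroHypercyclic T) (μ : ℂ) :
    LinearMap.ker ((T† - μ • 1 : H →L[ℂ] H) : H →ₗ[ℂ] H) = ⊥ := by
  obtain ⟨x, hx⟩ := hT
  refine (Submodule.eq_bot_iff _).2 fun g hg => by_contra fun hg0 => ?_
  have hTg : (T†) g = μ • g := sub_eq_zero.1 hg
  have hsurj : Function.Surjective (innerSL ℂ g) :=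
    LinearMap.surjective (f := (innerSL ℂ g : H →ₗ[ℂ] ℂ)) fun h =>
      hg0 (inner_self_eq_zero.1 (LinearMap.congr_fun h g))
  refine not_dense_range_natCast_inv_mul_pow_mul (conj μ) ⟪g, x⟫_ℂ
    ((hsurj.denseRange.dense_image (innerSL ℂ g).continuous hx).mono ?_)
  rintro _ ⟨_, ⟨n, -, rfl⟩, rfl⟩
  exact ⟨n, by simp only [innerSL_apply_apply, inner_smul_right,
    inner_pow_apply_of_adjoint_apply_eq_smul_s15 hTg, mul_assoc]⟩

section BoundedBelow

variable {E : Type*} [NormedAddCommGroup E] [NormedSpace ℂ E] {S : E →L[ℂ] E}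

lemma isBoundedBelow_iff_exists_antilipschitzWith :
    IsBoundedBelow S ↔ ∃ K, AntilipschitzWith K S := by
  constructor
  · rintro ⟨c, hc, hS⟩
    refine ⟨c.toNNReal⁻¹, S.antilipschitz_of_bound fun x => ?_⟩
    rw [NNReal.coe_inv, Real.coe_toNNReal c hc.le, le_inv_mul_iff₀ hc]
    exact hS x
  · rintro ⟨K, hK⟩
    refine ⟨((K : ℝ) + 1)⁻¹, by positivity, fun x => ?_⟩
    rw [inv_mul_le_iff₀ (by positivity)]
    calc ‖x‖ ≤ K * ‖S x‖ := S.bound_of_antilipschitz hK x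
      _ ≤ (K + 1) * ‖S x‖ := by gcongr; linarith

lemma isBoundedBelow_of_isUnit (hS : IsUnit S) : IsBoundedBelow S :=
  isBoundedBelow_iff_exists_antilipschitzWith.2
    ⟨_, (ContinuousLinearEquiv.unitsEquiv ℂ E hS.unit).antilipschitz⟩

lemma IsBoundedBelow.injective (hS : IsBoundedBelow S) : Function.Injective S :=
  have ⟨_, hK⟩ := isBoundedBelow_iff_exists_antilipschitzWith.1 hS
  hK.injective

lemma IsBoundedBelow.isClosed_range [CompleteSpace E] (hS : IsBoundedBelow S) :
    IsClosed (LinearMap.range (S : E →ₗ[ℂ] E) : Set E) :=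
  have ⟨_, hK⟩ := isBoundedBelow_iff_exists_antilipschitzWith.1 hS
  LinearMap.coe_range (S : E →ₗ[ℂ] E) ▸ hK.isClosed_range S.uniformContinuous

lemma IsBoundedBelow.isUnit_of_range_eq_top [CompleteSpace E] (hS : IsBoundedBelow S)
    (hrange : LinearMap.range (S : E →ₗ[ℂ] E) = ⊤) : IsUnit S :=
  S.isUnit_iff_bijective.2 ⟨hS.injective, LinearMap.range_eq_top.1 hrange⟩

lemma IndexLE0.ker_eq_bot_of_range_eq_top (hS : IndexLE0 S)
    (hrange : LinearMap.range (S : E →ₗ[ℂ] E) = ⊤) : LinearMap.ker (S : E →ₗ[ℂ] E) = ⊥ := by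
  have hquot : Module.rank ℂ (E ⧸ (⊤ : Submodule ℂ E)) = 0 := rank_zero_iff.2 inferInstance
  rw [IndexLE0, hrange, hquot, nonpos_iff_eq_zero, rank_zero_iff] at hS
  exact Submodule.subsingleton_iff_eq_bot.1 hS

end BoundedBelow

lemma pi00a_eq_pi00_of_spectrum_eq {E : Type*} [NormedAddCommGroup E] [NormedSpace ℂ E]
    {T : E →L[ℂ] E} (h : spectrum ℂ T = approxSpectrum T) : pi00a T = pi00 T := by
  rw [pi00a, pi00, h]

section NoAdjointEigenvalues

variable {H : Type*} [NormedAddCommGroup H] [InnerProductSpace ℂ H] [CompleteSpace H]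
  {T : H →L[ℂ] H}

lemma range_sub_smul_one_eq_top_of_isClosed
    (hker : ∀ μ : ℂ, LinearMap.ker ((T† - μ • 1 : H →L[ℂ] H) : H →ₗ[ℂ] H) = ⊥) {lam : ℂ}
    (hcl : IsClosed (LinearMap.range ((T - lam • 1 : H →L[ℂ] H) : H →ₗ[ℂ] H) : Set H)) :
    LinearMap.range ((T - lam • 1 : H →L[ℂ] H) : H →ₗ[ℂ] H) = ⊤ :=
  ContinuousLinearMap.range_eq_top_of_isClosed_of_ker_adjoint_eq_bot hcl <| by
    rw [ContinuousLinearMap.adjoint_sub_smul_one]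
    exact hker _

lemma spectrum_eq_approxSpectrum_of_forall_ker_adjoint_eq_bot
    (hker : ∀ μ : ℂ, LinearMap.ker ((T† - μ • 1 : H →L[ℂ] H) : H →ₗ[ℂ] H) = ⊥) :
    spectrum ℂ T = approxSpectrum T := by
  ext lam
  have hunit : IsUnit (algebraMap ℂ (H →L[ℂ] H) lam - T) ↔ IsUnit (T - lam • 1) := by
    rw [← IsUnit.neg_iff, neg_sub, Algebra.algebraMap_eq_smul_one]
  rw [spectrum.mem_iff, hunit]
  refine not_congr ⟨isBoundedBelow_of_isUnit, fun hb => ?_⟩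
  exact hb.isUnit_of_range_eq_top (range_sub_smul_one_eq_top_of_isClosed hker hb.isClosed_range)

lemma approxSpectrum_diff_essApproxSpectrum_eq_empty_of_forall_ker_adjoint_eq_bot
    (hker : ∀ μ : ℂ, LinearMap.ker ((T† - μ • 1 : H →L[ℂ] H) : H →ₗ[ℂ] H) = ⊥) :
    approxSpectrum T \ essApproxSpectrum T = ∅ := by
  refine Set.eq_empty_of_forall_notMem fun lam ⟨hla, hlea⟩ => hla ?_
  obtain ⟨⟨hcl, -⟩, hidx⟩ := not_not.1 hlea
  have hrange := range_sub_smul_one_eq_top_of_isClosed hker hcl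
  refine isBoundedBelow_of_isUnit ((T - lam • 1).isUnit_iff_bijective.2 ⟨?_, ?_⟩)
  · exact LinearMap.ker_eq_bot.1 (hidx.ker_eq_bot_of_range_eq_top hrange)
  · exact LinearMap.range_eq_top.1 hrange

end NoAdjointEigenvalues

variable {H : Type*} [NormedAddCommGroup H] [InnerProductSpace ℂ H] [CompleteSpace H]
  [TopologicalSpace.SeparableSpace H]

theorem cesaroHypercyclic_aWeylsTheorem_of_pi00_subset_general
    (T : H →L[ℂ] H) (hT : CesaroHypercyclic T)
    (hpi : pi00 T ⊆ pi00 (ContinuousLinearMap.adjoint T)) :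
    approxSpectrum T \ essApproxSpectrum T = pi00a T := by
  have hker := hT.ker_adjoint_sub_smul_one_eq_bot
  have hpi00 : pi00 T = ∅ := Set.subset_empty_iff.1 fun lam hlam => (hpi hlam).2.1 (hker lam)
  rw [approxSpectrum_diff_essApproxSpectrum_eq_empty_of_forall_ker_adjoint_eq_bot hker,
    pi00a_eq_pi00_of_spectrum_eq (spectrum_eq_approxSpectrum_of_forall_ker_adjoint_eq_bot hker),
    hpi00]

theorem cesaroHypercyclic_aWeylsTheorem_of_pi00_subset
    (hinf : ¬ FiniteDimensional ℂ H) (T : H →L[ℂ] H) (hT : CesaroHypercyclic T)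
    (hpi : pi00 T ⊆ pi00 (ContinuousLinearMap.adjoint T)) :
    approxSpectrum T \ essApproxSpectrum T = pi00a T :=
  cesaroHypercyclic_aWeylsTheorem_of_pi00_subset_general T hT hpi
end
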